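/- arXiv:2103.13797 — 3 statements merged into one kernel-verified Lean document; each statement's English description precedes it below -/
import Mathlib

section
/- For a concave differentiable R with strictly decreasing derivative, suppose positive reals ξ₁,...,ξ_N and B > ∑ξⱼ satisfy R'(ξᵢ) = p·R'((B−∑_{j≤i}ξⱼ)/w) + (1−p)·R'(ξ_{i+1}) for 1 ≤ i < N, and ξᵢ < (B−∑_{j≤i}ξⱼ)/w for all i < N. Then ξᵢ > ξ_{i+1} for all 1 ≤ i < N. -/
open Finset

/-- Strict monotonicity of a finite KKT sequence: if positive `ξ₁,…,ξ_N` satisfy the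
recursion `R'(ξᵢ) = p·R'((B−∑_{j≤i}ξⱼ)/w) + (1−p)·R'(ξ_{i+1})` for `1 ≤ i < N` and
`ξᵢ < (B−∑_{j≤i}ξⱼ)/w` for `i < N`, with `R'` strictly decreasing and positive,
then `ξᵢ > ξ_{i+1}` for all `1 ≤ i < N`. -/
theorem finite_kkt_strictly_decreasing
    (p : ℝ) (hp : 0 < p) (hp1 : p < 1) (w : ℕ) (hw : 1 ≤ w)
    (B : ℝ) (hB : 0 < B) (N : ℕ)
    (R' : ℝ → ℝ) (hanti : StrictAntiOn R' (Set.Ici (0 : ℝ)))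
    (hpos : ∀ x : ℝ, 0 ≤ x → 0 < R' x)
    (ξ : ℕ → ℝ) (hξpos : ∀ i, 1 ≤ i → i ≤ N → 0 < ξ i)
    (hsum : ∑ j ∈ Icc 1 N, ξ j < B)
    (hrec : ∀ i, 1 ≤ i → i < N →
      R' (ξ i) = p * R' ((B - ∑ j ∈ Icc 1 i, ξ j) / w) + (1 - p) * R' (ξ (i + 1)))
    (hlt : ∀ i, 1 ≤ i → i < N → ξ i < (B - ∑ j ∈ Icc 1 i, ξ j) / w) :
    ∀ i, 1 ≤ i → i < N → ξ (i + 1) < ξ i := by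
  intro i hi hiN
  have hξi : 0 < ξ i := hξpos i hi hiN.le
  have hξi1 : 0 < ξ (i + 1) := hξpos (i + 1) (by omega) (by omega)
  set c : ℝ := (B - ∑ j ∈ Icc 1 i, ξ j) / w with hc
  have hic : ξ i < c := hlt i hi hiN
  have hcmem : c ∈ Set.Ici (0 : ℝ) := le_of_lt (hξi.trans hic)
  have himem : ξ i ∈ Set.Ici (0 : ℝ) := hξi.le
  have hRc : R' c < R' (ξ i) := hanti himem hcmem hic
  have hrec' := hrec i hi hiN
  -- R'(ξ i) = p * R' c + (1-p) * R'(ξ (i+1)) with R' c < R'(ξ i)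
  have hkey : R' (ξ i) < R' (ξ (i + 1)) := by
    nlinarith [hrec', hRc]
  by_contra h
  push_neg at h
  rcases eq_or_lt_of_le h with heq | hlt'
  · rw [heq] at hkey; exact lt_irrefl _ hkey
  · exact absurd (hanti himem hξi1.le hlt') (not_lt.mpr hkey.le)
end

section
/- Uniqueness of the KKT fixed point: suppose R' is strictly decreasing, continuous, and positive. Then there is at most one sequence (xᵢ)_{i≥1} of nonnegative reals satisfying R'(xᵢ) = p·R'((B − ∑_{j=1}^{i} xⱼ)/w) + (1−p)·R'(x_{i+1}) for all i ≥ 1 and ∑_{i=1}^∞ xᵢ = B. -/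
/-!
Suppose two solutions `x ≠ y` first differ at index `k`, say `y k < x k`. Then also the
partial sums satisfy `∑_{j ≤ k} y j < ∑_{j ≤ k} x j`, so the remaining budget of `x` is smaller,
and since `R'` is decreasing the recursion forces `y (k + 1) < x (k + 1)`. Inductively `y ≤ x`
from `k` on, with strict inequality at `k`, contradicting that both sums equal `B`.
-/

open Finset

theorem sum_Icc_one_eq_sum_range {M : Type*} [AddCommMonoid M] (f : ℕ → M) (n : ℕ) :
    ∑ j ∈ Icc 1 n, f j = ∑ j ∈ range n, f (j + 1) := by
  induction n with
  | zero => simp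
  | succ n ih => rw [sum_Icc_succ_top (by omega), sum_range_succ, ih]

theorem StrictAntiOn.lt_of_lt_of_convexComb {R : ℝ → ℝ} (hR : StrictAntiOn R (Set.Ici 0))
    {p : ℝ} (hp : 0 ≤ p) (hp1 : p < 1) {u v u' v' a b : ℝ}
    (hu : 0 ≤ u) (hv : 0 ≤ v) (hu' : 0 ≤ u') (hv' : 0 ≤ v') (ha : 0 ≤ a) (hab : a ≤ b)
    (hRu : R u = p * R b + (1 - p) * R u') (hRv : R v = p * R a + (1 - p) * R v')
    (huv : u < v) : u' < v' := by
  have hRuv : R v < R u := hR hu hv huv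
  have hRab : p * R b ≤ p * R a :=
    mul_le_mul_of_nonneg_left (hR.antitoneOn ha (ha.trans hab) hab) hp
  have hR' : (1 - p) * R v' < (1 - p) * R u' := by linarith
  exact (hR.lt_iff_gt hv' hu').1 (lt_of_mul_lt_mul_left hR' (by linarith))

/-- Sequences are indexed from `1`; the value `x 0` plays no role. -/
structure IsKKTSolution (R : ℝ → ℝ) (p B w : ℝ) (x : ℕ → ℝ) : Prop where
  nonneg : ∀ i, 1 ≤ i → 0 ≤ x i
  recurrence : ∀ i, 1 ≤ i →
    R (x i) = p * R ((B - ∑ j ∈ Icc 1 i, x j) / w) + (1 - p) * R (x (i + 1))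
  hasSum : HasSum (fun i ↦ x (i + 1)) B

namespace IsKKTSolution

variable {R : ℝ → ℝ} {p B w : ℝ} {x y : ℕ → ℝ}

theorem sum_Icc_le (hx : IsKKTSolution R p B w x) (n : ℕ) : ∑ j ∈ Icc 1 n, x j ≤ B := by
  rw [sum_Icc_one_eq_sum_range]
  exact sum_le_hasSum _ (fun i _ ↦ hx.nonneg (i + 1) (by omega)) hx.hasSum

theorem succ_lt_succ (hx : IsKKTSolution R p B w x) (hy : IsKKTSolution R p B w y)
    (hR : StrictAntiOn R (Set.Ici 0)) (hp : 0 ≤ p) (hp1 : p < 1) (hw : 0 ≤ w)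
    {j : ℕ} (hj : 1 ≤ j) (hlt : y j < x j)
    (hsum : ∑ i ∈ Icc 1 j, y i < ∑ i ∈ Icc 1 j, x i) : y (j + 1) < x (j + 1) :=
  hR.lt_of_lt_of_convexComb hp hp1 (hy.nonneg j hj) (hx.nonneg j hj)
    (hy.nonneg (j + 1) (by omega)) (hx.nonneg (j + 1) (by omega))
    (div_nonneg (sub_nonneg.2 (hx.sum_Icc_le j)) hw)
    (div_le_div_of_nonneg_right (by linarith) hw) (hy.recurrence j hj) (hx.recurrence j hj) hlt

theorem lt_of_eqOn_of_lt (hx : IsKKTSolution R p B w x) (hy : IsKKTSolution R p B w y)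
    (hR : StrictAntiOn R (Set.Ici 0)) (hp : 0 ≤ p) (hp1 : p < 1) (hw : 0 ≤ w)
    {k : ℕ} (hk : 1 ≤ k) (heq : ∀ i, 1 ≤ i → i < k → x i = y i) (hlt : y k < x k)
    {j : ℕ} (hj : k ≤ j) : y j < x j ∧ ∑ i ∈ Icc 1 j, y i < ∑ i ∈ Icc 1 j, x i := by
  induction j, hj using Nat.le_induction with
  | base =>
    refine ⟨hlt, sum_lt_sum (fun i hi ↦ ?_) ⟨k, mem_Icc.2 ⟨hk, le_rfl⟩, hlt⟩⟩
    obtain ⟨hi1, hik⟩ := mem_Icc.1 hi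
    rcases hik.lt_or_eq with hik | rfl
    · exact (heq i hi1 hik).ge
    · exact hlt.le
  | succ j hkj ih =>
    have hnext := hx.succ_lt_succ hy hR hp hp1 hw (hk.trans hkj) ih.1 ih.2
    refine ⟨hnext, ?_⟩
    rw [sum_Icc_succ_top (by omega), sum_Icc_succ_top (by omega)]
    linarith [ih.2]

theorem not_lt_of_eqOn (hx : IsKKTSolution R p B w x) (hy : IsKKTSolution R p B w y)
    (hR : StrictAntiOn R (Set.Ici 0)) (hp : 0 ≤ p) (hp1 : p < 1) (hw : 0 ≤ w)
    {k : ℕ} (hk : 1 ≤ k) (heq : ∀ i, 1 ≤ i → i < k → x i = y i) : ¬ y k < x k := by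
  intro hlt
  have hle : (fun i ↦ y (i + 1)) ≤ fun i ↦ x (i + 1) := fun i ↦ by
    rcases lt_or_ge (i + 1) k with hik | hki
    · exact (heq (i + 1) (by omega) hik).ge
    · exact (hx.lt_of_eqOn_of_lt hy hR hp hp1 hw hk heq hlt hki).1.le
  have hltk : y (k - 1 + 1) < x (k - 1 + 1) := by rwa [Nat.sub_add_cancel hk]
  exact lt_irrefl B (hasSum_lt hle hltk hy.hasSum hx.hasSum)

theorem unique (hx : IsKKTSolution R p B w x) (hy : IsKKTSolution R p B w y)
    (hR : StrictAntiOn R (Set.Ici 0)) (hp : 0 ≤ p) (hp1 : p < 1) (hw : 0 ≤ w) :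
    ∀ i, 1 ≤ i → x i = y i := by
  intro k
  induction k using Nat.strong_induction_on with
  | _ k ih =>
    intro hk
    have heq : ∀ i, 1 ≤ i → i < k → x i = y i := fun i hi hik ↦ ih i hik hi
    exact le_antisymm (not_lt.1 (hx.not_lt_of_eqOn hy hR hp hp1 hw hk heq))
      (not_lt.1 (hy.not_lt_of_eqOn hx hR hp hp1 hw hk fun i hi hik ↦ (heq i hi hik).symm))

end IsKKTSolution

theorem kkt_solution_unique_general
    (p : ℝ) (hp : 0 < p) (hp1 : p < 1) (w : ℕ)
    (B : ℝ)
    (R' : ℝ → ℝ) (hanti : StrictAntiOn R' (Set.Ici (0 : ℝ)))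
    (x y : ℕ → ℝ)
    (hxnn : ∀ i, 1 ≤ i → 0 ≤ x i) (hynn : ∀ i, 1 ≤ i → 0 ≤ y i)
    (hxrec : ∀ i, 1 ≤ i →
      R' (x i) = p * R' ((B - ∑ j ∈ Icc 1 i, x j) / w) + (1 - p) * R' (x (i + 1)))
    (hyrec : ∀ i, 1 ≤ i →
      R' (y i) = p * R' ((B - ∑ j ∈ Icc 1 i, y j) / w) + (1 - p) * R' (y (i + 1)))
    (hxsum : HasSum (fun i : ℕ => x (i + 1)) B)
    (hysum : HasSum (fun i : ℕ => y (i + 1)) B) :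
    ∀ i, 1 ≤ i → x i = y i :=
  IsKKTSolution.unique ⟨hxnn, hxrec, hxsum⟩ ⟨hynn, hyrec, hysum⟩ hanti hp.le hp1 w.cast_nonneg

/-- Uniqueness of the KKT fixed point: if `R'` is strictly decreasing, continuous, and
positive on `[0,∞)`, then there is at most one nonnegative sequence `(xᵢ)_{i≥1}`
satisfying `R'(xᵢ) = p·R'((B−∑_{j≤i}xⱼ)/w) + (1−p)·R'(x_{i+1})` for all `i ≥ 1`
together with `∑_{i=1}^∞ xᵢ = B`. -/
theorem kkt_solution_unique
    (p : ℝ) (hp : 0 < p) (hp1 : p < 1) (w : ℕ) (hw : 1 ≤ w)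
    (B : ℝ) (hB : 0 < B)
    (R' : ℝ → ℝ) (hanti : StrictAntiOn R' (Set.Ici (0 : ℝ)))
    (hcont : ContinuousOn R' (Set.Ici (0 : ℝ)))
    (hpos : ∀ t : ℝ, 0 ≤ t → 0 < R' t)
    (x y : ℕ → ℝ)
    (hxnn : ∀ i, 1 ≤ i → 0 ≤ x i) (hynn : ∀ i, 1 ≤ i → 0 ≤ y i)
    (hxrec : ∀ i, 1 ≤ i →
      R' (x i) = p * R' ((B - ∑ j ∈ Icc 1 i, x j) / w) + (1 - p) * R' (x (i + 1)))
    (hyrec : ∀ i, 1 ≤ i →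
      R' (y i) = p * R' ((B - ∑ j ∈ Icc 1 i, y j) / w) + (1 - p) * R' (y (i + 1)))
    (hxsum : HasSum (fun i : ℕ => x (i + 1)) B)
    (hysum : HasSum (fun i : ℕ => y (i + 1)) B) :
    ∀ i, 1 ≤ i → x i = y i :=
  kkt_solution_unique_general p hp hp1 w B R' hanti x y hxnn hynn hxrec hyrec hxsum hysum
end

section
/- Gap bound between upper and lower optimal values: with the definitions of T̄_N and T̲_N below, for any feasible (ξᵢ)_{i=1}^N (ξᵢ ≥ 0, ∑ξᵢ ≤ B), T̄_N((ξᵢ)) − T̲_N((ξᵢ)) = ∑_{k=w+1}^∞ p²(1−p)^{k+N−1} k R((B−∑_{j=1}^N ξⱼ)/k) − p(1−p)^{N+w−1} w R((B−∑_{j=1}^N ξⱼ)/w) ≤ p(1−p)^{N+w} R'(0)(B−∑_{j=1}^N ξⱼ). -/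
open Finset

/-- Gap bound between the upper and lower throughput functionals (Proposition 3):
with `R(a) = (1/2)log₂(1+γa)` and `R'(0) = γ/(2 ln 2)`, for any feasible
`(ξᵢ)_{i=1}^N`, the gap `T̄_N − T̲_N` equals the tail sum minus the lower terminal
term, and is bounded by `p(1−p)^{N+w} R'(0)(B−∑_{j≤N}ξⱼ)`.  The infinite sum over
`k ≥ w` is written over `ℕ` via `k = m + w`. -/
theorem throughput_gap_bound
    (p : ℝ) (hp : 0 < p) (hp1 : p < 1) (w N : ℕ) (hw : 1 ≤ w) (hN : 1 ≤ N)
    (B γ : ℝ) (hB : 0 < B) (hγ : 0 < γ)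
    (R : ℝ → ℝ) (hR : ∀ a, R a = (1 / 2) * Real.logb 2 (1 + γ * a))
    (ξ : ℕ → ℝ) (hξnn : ∀ i, 0 ≤ ξ i) (hfeas : ∑ j ∈ Icc 1 N, ξ j ≤ B)
    (Tlow Tup : ℝ)
    (hTlow : Tlow =
      (∑ k ∈ Icc 1 w, p ^ 2 * (1 - p) ^ (k - 1) * (k : ℝ) * R (B / k)) +
      (∑ k ∈ Icc 1 N, p * (1 - p) ^ (k + w - 1) * R (ξ k)) +
      (∑ k ∈ Icc 1 (N - 1), p ^ 2 * (1 - p) ^ (k + w - 1) * (w : ℝ) *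
        R ((B - ∑ j ∈ Icc 1 k, ξ j) / w)) +
      p * (1 - p) ^ (N + w - 1) * (w : ℝ) * R ((B - ∑ j ∈ Icc 1 N, ξ j) / w))
    (hTup : Tup =
      (∑ k ∈ Icc 1 w, p ^ 2 * (1 - p) ^ (k - 1) * (k : ℝ) * R (B / k)) +
      (∑ k ∈ Icc 1 N, p * (1 - p) ^ (k + w - 1) * R (ξ k)) +
      (∑ k ∈ Icc 1 (N - 1), p ^ 2 * (1 - p) ^ (k + w - 1) * (w : ℝ) *
        R ((B - ∑ j ∈ Icc 1 k, ξ j) / w)) +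
      (∑' m : ℕ, p ^ 2 * (1 - p) ^ (m + w + N - 1) * ((m + w : ℕ) : ℝ) *
        R ((B - ∑ j ∈ Icc 1 N, ξ j) / ((m + w : ℕ) : ℝ)))) :
    Tup - Tlow =
      (∑' m : ℕ, p ^ 2 * (1 - p) ^ (m + w + N - 1) * ((m + w : ℕ) : ℝ) *
        R ((B - ∑ j ∈ Icc 1 N, ξ j) / ((m + w : ℕ) : ℝ))) -
      p * (1 - p) ^ (N + w - 1) * (w : ℝ) * R ((B - ∑ j ∈ Icc 1 N, ξ j) / w) ∧
    Tup - Tlow ≤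
      p * (1 - p) ^ (N + w) * (γ / (2 * Real.log 2)) * (B - ∑ j ∈ Icc 1 N, ξ j) := by
  have hS : 0 ≤ B - ∑ j ∈ Icc 1 N, ξ j := by linarith
  set S : ℝ := B - ∑ j ∈ Icc 1 N, ξ j with hSdef
  have hlog2 : 0 < Real.log 2 := Real.log_pos (by norm_num)
  set D : ℝ := γ / (2 * Real.log 2) with hD
  have hDpos : 0 < D := by positivity
  have hp' : 0 ≤ 1 - p := by linarith
  have hp'' : 1 - p < 1 := by linarith
  have hR0 : ∀ a : ℝ, 0 ≤ a → 0 ≤ R a := by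
    intro a ha
    rw [hR]
    have h1 : (1:ℝ) ≤ 1 + γ * a := by nlinarith
    have := Real.logb_nonneg (b := 2) one_lt_two h1
    linarith
  have hRle : ∀ a : ℝ, 0 ≤ a → R a ≤ D * a := by
    intro a ha
    rw [hR, Real.logb, hD]
    have h1 : (0:ℝ) < 1 + γ * a := by nlinarith
    have h2 : Real.log (1 + γ * a) ≤ γ * a := by
      have := Real.log_le_sub_one_of_pos h1
      linarith
    have h3 : Real.log (1 + γ * a) / (2 * Real.log 2) ≤ γ * a / (2 * Real.log 2) := by
      gcongr
    calc (1/2 : ℝ) * (Real.log (1 + γ * a) / Real.log 2)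
        = Real.log (1 + γ * a) / (2 * Real.log 2) := by ring
      _ ≤ γ * a / (2 * Real.log 2) := h3
      _ = γ / (2 * Real.log 2) * a := by ring
  set f : ℕ → ℝ := fun m => p ^ 2 * (1 - p) ^ (m + w + N - 1) * ((m + w : ℕ) : ℝ) *
      R (S / ((m + w : ℕ) : ℝ)) with hf
  have hkpos : ∀ m : ℕ, (0:ℝ) < ((m + w : ℕ) : ℝ) := by
    intro m
    have : 0 < m + w := by omega
    exact_mod_cast this
  have hfnn : ∀ m, 0 ≤ f m := by
    intro m
    have hr := hR0 (S / ((m + w : ℕ) : ℝ)) (by positivity)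
    have := hkpos m
    positivity
  set C : ℝ := p ^ 2 * (1 - p) ^ (w + N - 1) * D * S with hC
  have hfle : ∀ m, f m ≤ C * (1 - p) ^ m := by
    intro m
    have hk := hkpos m
    have hr := hRle (S / ((m + w : ℕ) : ℝ)) (by positivity)
    have hmul : ((m + w : ℕ) : ℝ) * R (S / ((m + w : ℕ) : ℝ)) ≤ D * S := by
      have := mul_le_mul_of_nonneg_left hr (le_of_lt hk)
      calc ((m + w : ℕ) : ℝ) * R (S / ((m + w : ℕ) : ℝ))
          ≤ ((m + w : ℕ) : ℝ) * (D * (S / ((m + w : ℕ) : ℝ))) := this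
        _ = D * S := by field_simp
    have hexp : (1 - p) ^ (m + w + N - 1) = (1 - p) ^ m * (1 - p) ^ (w + N - 1) := by
      rw [← pow_add]
      congr 1
      omega
    have hpow : (0:ℝ) ≤ (1 - p) ^ m * (1 - p) ^ (w + N - 1) := by positivity
    calc f m = p ^ 2 * ((1 - p) ^ m * (1 - p) ^ (w + N - 1)) *
          (((m + w : ℕ) : ℝ) * R (S / ((m + w : ℕ) : ℝ))) := by
          rw [hf]; simp only []; rw [hexp]; ring
      _ ≤ p ^ 2 * ((1 - p) ^ m * (1 - p) ^ (w + N - 1)) * (D * S) := by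
          apply mul_le_mul_of_nonneg_left hmul
          positivity
      _ = C * (1 - p) ^ m := by rw [hC]; ring
  have hgsum : Summable (fun m : ℕ => C * (1 - p) ^ m) :=
    (summable_geometric_of_lt_one hp' hp'').mul_left C
  have hfsum : Summable f := Summable.of_nonneg_of_le hfnn hfle hgsum
  have heq : Tup - Tlow =
      (∑' m : ℕ, f m) - p * (1 - p) ^ (N + w - 1) * (w : ℝ) * R (S / w) := by
    rw [hTup, hTlow]; ring
  refine ⟨heq, ?_⟩
  rw [heq]
  have hsplit : (∑' m : ℕ, f m) = f 0 + ∑' m : ℕ, f (m + 1) := Summable.tsum_eq_zero_add hfsum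
  have hf0 : f 0 ≤ p * (1 - p) ^ (N + w - 1) * (w : ℝ) * R (S / w) := by
    have hr := hR0 (S / (w : ℝ)) (by positivity)
    have hwpos : (0:ℝ) < (w:ℝ) := by exact_mod_cast hw
    have hexp : 0 + w + N - 1 = N + w - 1 := by omega
    have h0w : (0 : ℕ) + w = w := by omega
    have : f 0 = p ^ 2 * (1 - p) ^ (N + w - 1) * (w : ℝ) * R (S / (w : ℝ)) := by
      simp only [hf, hexp, h0w]
      rw [Nat.add_comm w N]
    rw [this]
    have hpp : p ^ 2 ≤ p := by nlinarith
    have h1 : (0:ℝ) ≤ (1 - p) ^ (N + w - 1) * (w : ℝ) * R (S / (w : ℝ)) := by positivity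
    nlinarith [mul_le_mul_of_nonneg_right hpp h1]
  have htail : (∑' m : ℕ, f (m + 1)) ≤ p * (1 - p) ^ (N + w) * D * S := by
    have hsum1 : Summable (fun m : ℕ => f (m + 1)) := (summable_nat_add_iff 1).2 hfsum
    have hg1 : Summable (fun m : ℕ => C * (1 - p) * (1 - p) ^ m) :=
      (summable_geometric_of_lt_one hp' hp'').mul_left _
    have hle' : ∀ m : ℕ, f (m + 1) ≤ C * (1 - p) * (1 - p) ^ m := by
      intro m
      calc f (m + 1) ≤ C * (1 - p) ^ (m + 1) := hfle (m + 1)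
        _ = C * (1 - p) * (1 - p) ^ m := by ring
    calc (∑' m : ℕ, f (m + 1)) ≤ ∑' m : ℕ, C * (1 - p) * (1 - p) ^ m :=
          Summable.tsum_le_tsum hle' hsum1 hg1
      _ = C * (1 - p) * (1 - (1 - p))⁻¹ := by
          rw [tsum_mul_left, tsum_geometric_of_lt_one hp' hp'']
      _ = p * (1 - p) ^ (N + w) * D * S := by
          have hpw : (1 - p) ^ (w + N - 1) * (1 - p) = (1 - p) ^ (N + w) := by
            rw [← pow_succ]
            congr 1
            omega
          have hpne : p ≠ 0 := ne_of_gt hp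
          rw [hC, show (1 - (1 - p)) = p by ring, ← hpw]
          field_simp
  rw [hsplit]
  calc f 0 + (∑' m : ℕ, f (m + 1)) - p * (1 - p) ^ (N + w - 1) * (w : ℝ) * R (S / w)
      ≤ (∑' m : ℕ, f (m + 1)) := by linarith
    _ ≤ p * (1 - p) ^ (N + w) * D * S := htail
end
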